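/- Let ν be a Borel probability measure on ℝ^n. Then inf{dim_H(E) : E ⊆ ℝ^n Borel, ν(E) = 1} equals the ν-essential supremum over x of the lower local dimension liminf_{r→0⁺} log ν(B(x,r))/log r. -/

import Mathlib

open MeasureTheory Metric Set Filter
open scoped NNReal ENNReal Topology

/-- The lower local dimension of a measure `ν` at a point `x`:
`liminf_{r → 0⁺} log ν(B(x,r)) / log r`, equal to `∞` when `ν(B(x,r)) = 0`
for arbitrarily small `r` (since `log 0 = -∞`). -/
noncomputable def lowerLocalDim {n : ℕ} (ν : Measure (EuclideanSpace ℝ (Fin n)))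
    (x : EuclideanSpace ℝ (Fin n)) : ℝ≥0∞ :=
  Filter.liminf
    (fun r : ℝ => if ν (ball x r) = 0 then ∞
      else ENNReal.ofReal (Real.log (ν (ball x r)).toReal / Real.log r))
    (𝓝[>] (0 : ℝ))

/-!
Write `L` for the essential supremum of the lower local dimension.

Upper bound: if `s > L`, then `ν`-almost every `x` has `ν(B(x,r)) ≥ r^s` for arbitrarily small
`r`. A Vitali covering of the set `S` of such points by disjoint balls `B(b, r_b)`, enlarged
fourfold, has `∑ diam^s ≤ 8^s ∑ ν(B(b, r_b)) ≤ 8^s`, so `ℋ^s(S) < ∞` and `dim_H S ≤ s`. A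
measurable set of full measure inside `S` then has dimension at most `s`.

Lower bound: if `t < L` and `ν(E) = 1`, then the points of `E` with lower local dimension `> t`
form a set of positive measure. By countable subadditivity some part of it of positive measure
satisfies `ν(B(x,r)) ≤ r^t` for all `r < ε`, with `ε` uniform. The mass distribution principle
then gives `dim_H E ≥ t`.
-/

lemma Real.log_div_log_le_iff_rpow_le {r m t : ℝ} (hr0 : 0 < r) (hr1 : r < 1) (hm : 0 < m) :
    Real.log m / Real.log r ≤ t ↔ r ^ t ≤ m := by
  rw [div_le_iff_of_neg (Real.log_neg hr0 hr1), ← Real.log_rpow hr0,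
    Real.log_le_log_iff (Real.rpow_pos_of_pos hr0 t) hm]

lemma ediam_closedBall_le {X : Type*} [PseudoMetricSpace X] (x : X) (r : ℝ) :
    ediam (closedBall x r) ≤ ENNReal.ofReal (2 * r) :=
  ediam_le_of_forall_dist_le fun _y hy _z hz =>
    (dist_triangle_right _ _ x).trans (by linarith [mem_closedBall.1 hy, mem_closedBall.1 hz])

lemma Set.PairwiseDisjoint.countable_of_measure_pos {X ι : Type*} [MeasurableSpace X]
    {ν : Measure X} [SFinite ν] {u : Set ι} {f : ι → Set X} (hd : u.PairwiseDisjoint f)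
    (hf : ∀ i ∈ u, MeasurableSet (f i)) (hpos : ∀ i ∈ u, 0 < ν (f i)) : u.Countable := by
  have hcount := Measure.countable_meas_pos_of_disjoint_iUnion (μ := ν) (As := fun i : u => f i)
    (fun i => hf i i.2) fun i j hij => hd i.2 j.2 (Subtype.coe_injective.ne hij)
  have hall : {i : u | 0 < ν (f i)} = univ := eq_univ_of_forall fun i => hpos i i.2
  rw [hall, countable_univ_iff] at hcount
  exact countable_coe_iff.1 hcount

lemma exists_measure_sep_forall_Ioo_ne_zero {X : Type*} [MeasurableSpace X] (ν : Measure X)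
    {A : Set X} (hA : ν A ≠ 0) {p : X → ℝ → Prop} (h : ∀ x ∈ A, ∀ᶠ r in 𝓝[>] 0, p x r) :
    ∃ ε > 0, ν {x ∈ A | ∀ r ∈ Ioo 0 ε, p x r} ≠ 0 := by
  by_contra! hnull
  refine hA (measure_mono_null (fun x hx => ?_) (measure_iUnion_null fun k : ℕ =>
    hnull (1 / (k + 1)) Nat.one_div_pos_of_nat))
  obtain ⟨ε, hε, hp⟩ := mem_nhdsGT_iff_exists_Ioo_subset.1 (h x hx)
  obtain ⟨k, hk⟩ := exists_nat_one_div_lt (mem_Ioi.1 hε)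
  exact mem_iUnion.2 ⟨k, hx, fun r hr => hp ⟨hr.1, hr.2.trans hk⟩⟩

noncomputable def ballLogRatio {X : Type*} [PseudoMetricSpace X] [MeasurableSpace X]
    (ν : Measure X) (x : X) (r : ℝ) : ℝ≥0∞ :=
  if ν (ball x r) = 0 then ∞ else ENNReal.ofReal (Real.log (ν (ball x r)).toReal / Real.log r)

lemma ballLogRatio_le_iff {X : Type*} [PseudoMetricSpace X] [MeasurableSpace X] (ν : Measure X)
    {x : X} {r : ℝ} (hr0 : 0 < r) (hr1 : r < 1) (t : ℝ≥0) :
    ballLogRatio ν x r ≤ t ↔ ENNReal.ofReal (r ^ (t : ℝ)) ≤ ν (ball x r) := by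
  rw [ballLogRatio]
  split_ifs with h0
  · simp [h0, Real.rpow_pos_of_pos hr0]
  rcases eq_or_ne (ν (ball x r)) ∞ with htop | htop
  · -- `toReal ∞ = 0`, so the ratio is `0` here
    simp [htop]
  rw [← ENNReal.ofReal_coe_nnreal, ENNReal.ofReal_le_ofReal_iff t.coe_nonneg,
    ENNReal.ofReal_le_iff_le_toReal htop,
    Real.log_div_log_le_iff_rpow_le hr0 hr1 (ENNReal.toReal_pos h0 htop)]

section MetricMeasure

variable {X : Type*} [MetricSpace X] [MeasurableSpace X] (ν : Measure X)

lemma measure_inter_le_ediam_rpow {A s : Set X} {t : ℝ≥0} {ε : ℝ}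
    (h : ∀ x ∈ A, ∀ r ∈ Ioo 0 ε, ν (ball x r) ≤ ENNReal.ofReal (r ^ (t : ℝ)))
    (hs : ediam s < ENNReal.ofReal ε) : ν (s ∩ A) ≤ ediam s ^ (t : ℝ) := by
  rcases (s ∩ A).eq_empty_or_nonempty with hempty | ⟨x, hxs, hxA⟩
  · simp [hempty]
  have hfin : ediam s ≠ ∞ := hs.ne_top
  have hball : ∀ r ∈ Ioo (diam s) ε, ν (s ∩ A) ≤ ENNReal.ofReal (r ^ (t : ℝ)) := fun r hr =>
    calc ν (s ∩ A) ≤ ν (ball x r) := measure_mono fun y hy =>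
          mem_ball.2 <| (dist_le_diam_of_mem' hfin hy.1 hxs).trans_lt hr.1
      _ ≤ _ := h x hxA r ⟨diam_nonneg.trans_lt hr.1, hr.2⟩
  have hlim : Tendsto (fun r : ℝ => ENNReal.ofReal (r ^ (t : ℝ))) (𝓝[>] (diam s))
      (𝓝 (ENNReal.ofReal (diam s ^ (t : ℝ)))) :=
    ENNReal.tendsto_ofReal <|
      (Real.continuousAt_rpow_const _ _ (Or.inr t.coe_nonneg)).tendsto.mono_left nhdsWithin_le_nhds
  calc ν (s ∩ A) ≤ ENNReal.ofReal (diam s ^ (t : ℝ)) :=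
        ge_of_tendsto hlim <| eventually_of_mem
          (Ioo_mem_nhdsGT (ENNReal.toReal_lt_of_lt_ofReal hs)) hball
    _ = ediam s ^ (t : ℝ) := by
        rw [diam, ← ENNReal.ofReal_rpow_of_nonneg ENNReal.toReal_nonneg t.coe_nonneg,
          ENNReal.ofReal_toReal hfin]

variable [BorelSpace X]

/-- The mass distribution principle. -/
lemma coe_le_dimH_of_measure_ball_le {A : Set X} {t : ℝ≥0} {ε : ℝ} (hε : 0 < ε)
    (h : ∀ x ∈ A, ∀ r ∈ Ioo 0 ε, ν (ball x r) ≤ ENNReal.ofReal (r ^ (t : ℝ)))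
    (hA : ν A ≠ 0) : (t : ℝ≥0∞) ≤ dimH A := by
  have hle : ν.restrict A ≤ μH[t] := by
    refine Measure.le_hausdorffMeasure t _ (ENNReal.ofReal (ε / 2)) (by simpa) fun s hs => ?_
    have hs' : ediam (closure s) < ENNReal.ofReal ε := by
      rw [ediam_closure]
      exact hs.trans_lt ((ENNReal.ofReal_lt_ofReal_iff hε).2 (half_lt_self hε))
    -- `A` need not be measurable, so evaluate `ν.restrict A` on the closed set `closure s`
    calc ν.restrict A s ≤ ν.restrict A (closure s) := measure_mono subset_closure
      _ = ν (closure s ∩ A) := Measure.restrict_apply isClosed_closure.measurableSet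
      _ ≤ ediam (closure s) ^ (t : ℝ) := measure_inter_le_ediam_rpow ν h hs'
      _ = ediam s ^ (t : ℝ) := by rw [ediam_closure]
  refine le_dimH_of_hausdorffMeasure_ne_zero fun h0 => hA ?_
  simpa [h0] using hle A

variable [IsFiniteMeasure ν]

lemma exists_countable_cover_tsum_ediam_rpow_le {S : Set X} {s : ℝ≥0}
    (h : ∀ x ∈ S, ∃ᶠ r in 𝓝[>] 0, ENNReal.ofReal (r ^ (s : ℝ)) ≤ ν (ball x r))
    {δ : ℝ} (hδ : 0 < δ) :
    ∃ (u : Set X) (ρ : X → ℝ), u.Countable ∧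
      (∀ b ∈ u, ediam (closedBall b (ρ b)) ≤ ENNReal.ofReal δ) ∧
      S ⊆ ⋃ b ∈ u, closedBall b (ρ b) ∧
      ∑' b : u, ediam (closedBall (b : X) (ρ b)) ^ (s : ℝ) ≤ 8 ^ (s : ℝ) * ν univ := by
  choose! rad hrad using fun x hx =>
    ((h x hx).and_eventually (Ioo_mem_nhdsGT (show 0 < δ / 8 by positivity))).exists
  obtain ⟨u, huS, hdisj, hcov⟩ := Vitali.exists_disjoint_subfamily_covering_enlargement_closedBall
    S id rad (δ / 8) (fun a ha => (hrad a ha).2.2.le) 4 (by norm_num)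
  simp only [id] at hdisj hcov
  have hmass : ∀ b ∈ u, ENNReal.ofReal (rad b ^ (s : ℝ)) ≤ ν (closedBall b (rad b)) :=
    fun b hb => (hrad b (huS hb)).1.trans (measure_mono ball_subset_closedBall)
  have hcount : u.Countable := hdisj.countable_of_measure_pos
    (fun _ _ => measurableSet_closedBall) fun b hb =>
      (ENNReal.ofReal_pos.2 (Real.rpow_pos_of_pos (hrad b (huS hb)).2.1 _)).trans_le (hmass b hb)
  refine ⟨u, fun b => 4 * rad b, hcount, fun b hb => ?_, fun a ha => ?_, ?_⟩
  · exact (ediam_closedBall_le b _).trans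
      (ENNReal.ofReal_le_ofReal (by linarith [(hrad b (huS hb)).2.2]))
  · obtain ⟨b, hb, hab⟩ := hcov a ha
    exact mem_biUnion hb (hab (mem_closedBall_self (hrad a ha).2.1.le))
  · have := hcount.to_subtype
    calc ∑' b : u, ediam (closedBall (b : X) (4 * rad b)) ^ (s : ℝ)
        ≤ ∑' b : u, 8 ^ (s : ℝ) * ν (closedBall (b : X) (rad b)) := by
          refine ENNReal.tsum_le_tsum fun b => ?_
          calc ediam (closedBall (b : X) (4 * rad b)) ^ (s : ℝ)
              ≤ (8 * ENNReal.ofReal (rad b)) ^ (s : ℝ) := by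
                gcongr
                refine (ediam_closedBall_le _ _).trans_eq ?_
                rw [← mul_assoc, ENNReal.ofReal_mul (by norm_num)]
                norm_num
            _ = 8 ^ (s : ℝ) * ENNReal.ofReal (rad b ^ (s : ℝ)) := by
              rw [ENNReal.mul_rpow_of_nonneg _ _ s.coe_nonneg,
                ENNReal.ofReal_rpow_of_nonneg (hrad b (huS b.2)).2.1.le s.coe_nonneg]
            _ ≤ 8 ^ (s : ℝ) * ν (closedBall (b : X) (rad b)) := by gcongr; exact hmass b b.2
      _ = 8 ^ (s : ℝ) * ν (⋃ b ∈ u, closedBall b (rad b)) := by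
          rw [ENNReal.tsum_mul_left,
            measure_biUnion hcount hdisj fun _ _ => measurableSet_closedBall]
      _ ≤ 8 ^ (s : ℝ) * ν univ := by gcongr; exact subset_univ _

lemma hausdorffMeasure_le_of_frequently_rpow_le_measure_ball {S : Set X} {s : ℝ≥0}
    (h : ∀ x ∈ S, ∃ᶠ r in 𝓝[>] 0, ENNReal.ofReal (r ^ (s : ℝ)) ≤ ν (ball x r)) :
    μH[s] S ≤ 8 ^ (s : ℝ) * ν univ := by
  choose u ρ hcount hdiam hcover hsum using fun k : ℕ =>
    exists_countable_cover_tsum_ediam_rpow_le ν h (Nat.one_div_pos_of_nat (n := k))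
  have := fun k => (hcount k).to_subtype
  have hlim : Tendsto (fun k : ℕ => ENNReal.ofReal (1 / (k + 1))) atTop (𝓝 0) := by
    simpa using ENNReal.tendsto_ofReal tendsto_one_div_add_atTop_nhds_zero_nat
  calc μH[s] S ≤ liminf (fun k => ∑' b : u k, ediam (closedBall (b : X) (ρ k b)) ^ (s : ℝ))
        atTop :=
        Measure.hausdorffMeasure_le_liminf_tsum _ S _ hlim (fun k (b : u k) => closedBall b (ρ k b))
          (.of_forall fun k b => hdiam k b b.2)
          (.of_forall fun k => (hcover k).trans (biUnion_eq_iUnion _ _).le)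
    _ ≤ 8 ^ (s : ℝ) * ν univ := liminf_le_of_frequently_le' (.of_forall hsum)

end MetricMeasure

section LowerLocalDim

variable {n : ℕ} (ν : Measure (EuclideanSpace ℝ (Fin n)))

lemma lowerLocalDim_eq_liminf (x : EuclideanSpace ℝ (Fin n)) :
    lowerLocalDim ν x = liminf (ballLogRatio ν x) (𝓝[>] 0) :=
  rfl

lemma frequently_rpow_le_measure_ball_of_lowerLocalDim_lt {x : EuclideanSpace ℝ (Fin n)}
    {s : ℝ≥0} (h : lowerLocalDim ν x < s) :
    ∃ᶠ r in 𝓝[>] 0, ENNReal.ofReal (r ^ (s : ℝ)) ≤ ν (ball x r) := by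
  rw [lowerLocalDim_eq_liminf] at h
  refine ((frequently_lt_of_liminf_lt (by isBoundedDefault) h).and_eventually
    (Ioo_mem_nhdsGT one_pos)).mono fun r ⟨hlt, hr⟩ => ?_
  exact (ballLogRatio_le_iff ν hr.1 hr.2 s).1 hlt.le

lemma eventually_measure_ball_le_rpow_of_lt_lowerLocalDim {x : EuclideanSpace ℝ (Fin n)}
    {t : ℝ≥0} (h : t < lowerLocalDim ν x) :
    ∀ᶠ r in 𝓝[>] 0, ν (ball x r) ≤ ENNReal.ofReal (r ^ (t : ℝ)) := by
  rw [lowerLocalDim_eq_liminf] at h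
  filter_upwards [eventually_lt_of_lt_liminf h, Ioo_mem_nhdsGT one_pos] with r hlt hr
  exact (not_le.1 (mt (ballLogRatio_le_iff ν hr.1 hr.2 t).2 hlt.not_ge)).le

lemma dimH_le_of_forall_lowerLocalDim_le [IsFiniteMeasure ν]
    {S : Set (EuclideanSpace ℝ (Fin n))} {d : ℝ≥0∞} (h : ∀ x ∈ S, lowerLocalDim ν x ≤ d) :
    dimH S ≤ d := by
  by_contra! hlt
  obtain ⟨s, hds, hsS⟩ := ENNReal.lt_iff_exists_nnreal_btwn.1 hlt
  refine hsS.not_ge (dimH_le_of_hausdorffMeasure_ne_top (ne_top_of_le_ne_top ?_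
    (hausdorffMeasure_le_of_frequently_rpow_le_measure_ball ν fun x hx =>
      frequently_rpow_le_measure_ball_of_lowerLocalDim_lt ν ((h x hx).trans_lt hds))))
  finiteness

lemma coe_le_dimH_of_forall_lt_lowerLocalDim {A : Set (EuclideanSpace ℝ (Fin n))}
    (hA : ν A ≠ 0) {t : ℝ≥0} (h : ∀ x ∈ A, t < lowerLocalDim ν x) : (t : ℝ≥0∞) ≤ dimH A := by
  obtain ⟨ε, hε, hpos⟩ := exists_measure_sep_forall_Ioo_ne_zero ν hA fun x hx =>
    eventually_measure_ball_le_rpow_of_lt_lowerLocalDim ν (h x hx)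
  exact (coe_le_dimH_of_measure_ball_le ν hε (fun x hx => hx.2) hpos).trans
    (dimH_mono (sep_subset _ _))

end LowerLocalDim

theorem stmt_3 (n : ℕ) (ν : Measure (EuclideanSpace ℝ (Fin n)))
    [IsProbabilityMeasure ν] :
    (⨅ (E : Set (EuclideanSpace ℝ (Fin n))) (_ : MeasurableSet E) (_ : ν E = 1), dimH E)
      = essSup (lowerLocalDim ν) ν := by
  apply le_antisymm
  · obtain ⟨N, hN, hNm, hN0⟩ :=
      exists_measurable_superset_of_null (ae_iff.1 (ENNReal.ae_le_essSup (lowerLocalDim ν)))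
    refine iInf₂_le_of_le Nᶜ hNm.compl <| iInf_le_of_le ((prob_compl_eq_one_iff hNm).2 hN0) ?_
    exact dimH_le_of_forall_lowerLocalDim_le ν fun x hx => not_not.1 fun h => hx (hN h)
  · refine le_iInf₂ fun E hE => le_iInf fun hE1 => ENNReal.le_of_forall_nnreal_lt fun t ht => ?_
    have hT : ν {x | t < lowerLocalDim ν x} ≠ 0 := fun h0 =>
      ht.not_ge (essSup_le_of_ae_le _ (ae_iff.2 (by simpa using h0)))
    rw [← measure_inter_conull ((prob_compl_eq_zero_iff hE).2 hE1)] at hT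
    exact (coe_le_dimH_of_forall_lt_lowerLocalDim ν hT fun x hx => hx.1).trans
      (dimH_mono inter_subset_right)
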